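/- For every integer k ≥ 2 and every i ∈ {0,…,k}, the corner submatrices 𝒢_{2^k,2^i} and 𝒢̄_{2^k,2^i} are diagonal in the Hadamard basis; in particular, H_k · 𝒢_{2^k} · H_k is a diagonal matrix. -/

import Mathlib

/-- `tilde k i` is the vector `ĩ_k ∈ {1,−1}^k`: the k-digit binary representation of
`i` (most significant digit first) with digit 0 replaced by 1 and digit 1 by −1. -/
def tilde (k : ℕ) (i : Fin (2 ^ k)) : Fin k → ℝ :=
  fun t => if Nat.testBit i.val (k - 1 - t.val) then -1 else 1

/-- The game matrix `𝒢_{2^k}` with entries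
`(𝒢_{2^k})_{i,j} = (1, ĩ_k) ⋆ (−1, j̃_k) = sign(ĩ_k · j̃_k − 1)`. -/
noncomputable def gameMatrix (k : ℕ) : Matrix (Fin (2 ^ k)) (Fin (2 ^ k)) ℝ :=
  Matrix.of fun i j => Real.sign ((∑ t, tilde k i t * tilde k j t) - 1)

/-- `𝒢_{2^k,x}`: the top-left `x × x` corner submatrix of `𝒢_{2^k}`. -/
noncomputable def cornerTL (k x : ℕ) (h : x ≤ 2 ^ k) : Matrix (Fin x) (Fin x) ℝ :=
  Matrix.of fun i j =>
    gameMatrix k ⟨i.val, lt_of_lt_of_le i.isLt h⟩ ⟨j.val, lt_of_lt_of_le j.isLt h⟩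

/-- `𝒢̄_{2^k,x}`: the top-right `x × x` corner submatrix of `𝒢_{2^k}`
(rows `1,…,x`, columns `2^k−x+1,…,2^k`). -/
noncomputable def cornerTR (k x : ℕ) (h : x ≤ 2 ^ k) : Matrix (Fin x) (Fin x) ℝ :=
  Matrix.of fun i j =>
    gameMatrix k ⟨i.val, lt_of_lt_of_le i.isLt h⟩
      ⟨2 ^ k - x + j.val, by omega⟩

/-- The canonical equivalence `Fin (2^m) ⊕ Fin (2^m) ≃ Fin (2^(m+1))`. -/
def finPowEquiv (m : ℕ) : Fin (2 ^ m) ⊕ Fin (2 ^ m) ≃ Fin (2 ^ (m + 1)) :=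
  finSumFinEquiv.trans (finCongr (by rw [pow_succ, mul_two]))

/-- The `2 × 2` block matrix `[[W,X],[Y,Z]]` with blocks of size `2^m × 2^m`,
as a `2^(m+1) × 2^(m+1)` matrix. -/
noncomputable def blk {m : ℕ} (W X Y Z : Matrix (Fin (2 ^ m)) (Fin (2 ^ m)) ℝ) :
    Matrix (Fin (2 ^ (m + 1))) (Fin (2 ^ (m + 1))) ℝ :=
  Matrix.reindex (finPowEquiv m) (finPowEquiv m) (Matrix.fromBlocks W X Y Z)

/-- The Hadamard matrix `H_m`, defined recursively by `H_0 = (1)` and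
`H_{m+1} = (1/√2)[[H_m, H_m],[H_m, −H_m]]`. -/
noncomputable def Had : (m : ℕ) → Matrix (Fin (2 ^ m)) (Fin (2 ^ m)) ℝ
  | 0 => Matrix.of fun _ _ => 1
  | m + 1 => (Real.sqrt 2)⁻¹ • blk (Had m) (Had m) (Had m) (-(Had m))

/-! The entry `sign(ĩ·j̃ − 1)` of `𝒢_{2^k}` depends only on `i xor j`, since `ĩ·j̃` is `k` minus
twice the number of bits in which `i` and `j` differ. So `𝒢_{2^k}` is a convolution matrix on the
group `(ℤ/2)^k`, whose characters are the columns of the Sylvester–Hadamard matrix; hence it is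
diagonal in the Hadamard basis. A `2^i × 2^i` block aligned on multiples of `2^i`, like both
corners, is again a convolution matrix on `(ℤ/2)^i`. -/

theorem Nat.two_pow_mul_add_xor_two_pow_mul_add {i a b : ℕ} (p q : ℕ) (ha : a < 2 ^ i)
    (hb : b < 2 ^ i) : (2 ^ i * p + a) ^^^ (2 ^ i * q + b) = 2 ^ i * (p ^^^ q) + (a ^^^ b) := by
  apply Nat.eq_of_testBit_eq
  intro j
  simp only [Nat.testBit_xor, Nat.testBit_two_pow_mul_add _ ha,
    Nat.testBit_two_pow_mul_add _ hb, Nat.testBit_two_pow_mul_add _ (Nat.xor_lt_two_pow ha hb)]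
  split_ifs <;> rfl

section Blocks

variable {m : ℕ}

theorem blk_mul (W X Y Z W' X' Y' Z' : Matrix (Fin (2 ^ m)) (Fin (2 ^ m)) ℝ) :
    blk W X Y Z * blk W' X' Y' Z' =
      blk (W * W' + X * Y') (W * X' + X * Z') (Y * W' + Z * Y') (Y * X' + Z * Z') := by
  simp only [blk, Matrix.reindex_apply, Matrix.submatrix_mul_equiv, Matrix.fromBlocks_multiply]

theorem smul_blk (c : ℝ) (W X Y Z : Matrix (Fin (2 ^ m)) (Fin (2 ^ m)) ℝ) :
    c • blk W X Y Z = blk (c • W) (c • X) (c • Y) (c • Z) := by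
  simp only [blk, Matrix.reindex_apply, ← Matrix.fromBlocks_smul, Matrix.submatrix_smul]
  rfl

theorem Matrix.IsDiag.blk {D D' : Matrix (Fin (2 ^ m)) (Fin (2 ^ m)) ℝ} (h : D.IsDiag)
    (h' : D'.IsDiag) : (_root_.blk D 0 0 D').IsDiag :=
  (h.fromBlocks h').submatrix (finPowEquiv m).symm.injective

theorem finPowEquiv_inl_val (a : Fin (2 ^ m)) : (finPowEquiv m (Sum.inl a)).val = a.val := by
  simp [finPowEquiv]

theorem finPowEquiv_inr_val (a : Fin (2 ^ m)) :
    (finPowEquiv m (Sum.inr a)).val = 2 ^ m + a.val := by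
  simp [finPowEquiv]
  omega

end Blocks

theorem Had_succ_mul_blk_mul_Had_succ {m : ℕ} (A B : Matrix (Fin (2 ^ m)) (Fin (2 ^ m)) ℝ) :
    Had (m + 1) * blk A B B A * Had (m + 1) =
      blk (Had m * (A + B) * Had m) 0 0 (Had m * (A - B) * Had m) := by
  set H := Had m
  have hsq : (Real.sqrt 2)⁻¹ * (Real.sqrt 2)⁻¹ = 2⁻¹ := by
    rw [← mul_inv, Real.mul_self_sqrt zero_le_two]
  have hhalf : ∀ X : Matrix (Fin (2 ^ m)) (Fin (2 ^ m)) ℝ, (2⁻¹ : ℝ) • (X + X) = X := fun X => by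
    rw [← two_smul ℝ X, smul_smul, inv_mul_cancel₀ two_ne_zero, one_smul]
  have hblocks : blk H H H (-H) * blk A B B A * blk H H H (-H) =
      blk (H * (A + B) * H + H * (A + B) * H) 0 0 (H * (A - B) * H + H * (A - B) * H) := by
    rw [blk_mul, blk_mul]
    noncomm_ring
  rw [Had, Matrix.smul_mul, Matrix.mul_smul, Matrix.smul_mul, smul_smul, hsq, hblocks, smul_blk,
    smul_zero, hhalf, hhalf]

def xorMatrix (m : ℕ) (f : ℕ → ℝ) : Matrix (Fin (2 ^ m)) (Fin (2 ^ m)) ℝ :=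
  Matrix.of fun a b => f (a.val ^^^ b.val)

theorem xorMatrix_add (m : ℕ) (f g : ℕ → ℝ) :
    xorMatrix m f + xorMatrix m g = xorMatrix m (f + g) := rfl

theorem xorMatrix_sub (m : ℕ) (f g : ℕ → ℝ) :
    xorMatrix m f - xorMatrix m g = xorMatrix m (f - g) := rfl

theorem xorMatrix_succ (m : ℕ) (f : ℕ → ℝ) :
    xorMatrix (m + 1) f =
      blk (xorMatrix m f) (xorMatrix m (f <| 2 ^ m + ·)) (xorMatrix m (f <| 2 ^ m + ·))
        (xorMatrix m f) := by
  ext i j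
  obtain ⟨a, rfl⟩ := (finPowEquiv m).surjective i
  obtain ⟨b, rfl⟩ := (finPowEquiv m).surjective j
  simp only [blk, Matrix.reindex_apply, Matrix.submatrix_apply,
    Equiv.symm_apply_apply, xorMatrix, Matrix.of_apply]
  have hxor := @Nat.two_pow_mul_add_xor_two_pow_mul_add m
  rcases a with a | a <;> rcases b with b | b <;>
    simp only [Matrix.fromBlocks_apply₁₁, Matrix.fromBlocks_apply₁₂, Matrix.fromBlocks_apply₂₁,
      Matrix.fromBlocks_apply₂₂, finPowEquiv_inl_val, finPowEquiv_inr_val, Matrix.of_apply]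
  · simpa using congrArg f (hxor 0 1 a.isLt b.isLt)
  · simpa using congrArg f (hxor 1 0 a.isLt b.isLt)
  · simpa using congrArg f (hxor 1 1 a.isLt b.isLt)

theorem isDiag_Had_mul_xorMatrix_mul_Had (m : ℕ) (f : ℕ → ℝ) :
    (Had m * xorMatrix m f * Had m).IsDiag := by
  induction m generalizing f with
  | zero => exact fun i j hij => absurd (Subsingleton.elim (α := Fin 1) i j) hij
  | succ m ih =>
    rw [xorMatrix_succ, Had_succ_mul_blk_mul_Had_succ, xorMatrix_add, xorMatrix_sub]
    exact (ih _).blk (ih _)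

noncomputable def gameEntry (k x : ℕ) : ℝ :=
  Real.sign ((∑ t : Fin k, if Nat.testBit x (k - 1 - t.val) then (-1 : ℝ) else 1) - 1)

theorem tilde_mul_tilde (k : ℕ) (a b : Fin (2 ^ k)) (t : Fin k) :
    tilde k a t * tilde k b t =
      if Nat.testBit (a.val ^^^ b.val) (k - 1 - t.val) then -1 else 1 := by
  rw [tilde, tilde, Nat.testBit_xor]
  split_ifs <;> simp_all

theorem gameMatrix_apply (k : ℕ) (a b : Fin (2 ^ k)) :
    gameMatrix k a b = gameEntry k (a.val ^^^ b.val) := by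
  simp only [gameMatrix, gameEntry, Matrix.of_apply, tilde_mul_tilde]

theorem gameMatrix_eq_xorMatrix (k : ℕ) : gameMatrix k = xorMatrix k (gameEntry k) := by
  ext a b
  exact gameMatrix_apply k a b

theorem cornerTL_eq_xorMatrix {k i : ℕ} (h : 2 ^ i ≤ 2 ^ k) :
    cornerTL k (2 ^ i) h = xorMatrix i (gameEntry k) := by
  ext a b
  exact gameMatrix_apply k _ _

theorem cornerTR_eq_xorMatrix {k i : ℕ} (hi : i ≤ k) (h : 2 ^ i ≤ 2 ^ k) :
    cornerTR k (2 ^ i) h = xorMatrix i (gameEntry k <| 2 ^ k - 2 ^ i + ·) := by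
  have hoffset : 2 ^ k - 2 ^ i = 2 ^ i * (2 ^ (k - i) - 1) := by
    rw [Nat.mul_sub, mul_one, ← pow_add, Nat.add_sub_cancel' hi]
  ext a b
  simp only [cornerTR, xorMatrix, Matrix.of_apply, gameMatrix_apply, hoffset]
  simpa using congrArg (gameEntry k)
    (Nat.two_pow_mul_add_xor_two_pow_mul_add 0 (2 ^ (k - i) - 1) a.isLt b.isLt)

/-- For every integer `k ≥ 2` and every `i ∈ {0,…,k}`, the corner
submatrices `𝒢_{2^k,2^i}` and `𝒢̄_{2^k,2^i}` are diagonal in the Hadamard basis;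
in particular, `H_k · 𝒢_{2^k} · H_k` is a diagonal matrix. -/
theorem stmt_19 (k : ℕ) :
    (∀ i, ∀ hi : i ≤ k,
      (Had i * cornerTL k (2 ^ i) (Nat.pow_le_pow_right (by norm_num) hi) * Had i).IsDiag ∧
      (Had i * cornerTR k (2 ^ i) (Nat.pow_le_pow_right (by norm_num) hi) * Had i).IsDiag) ∧
    (Had k * gameMatrix k * Had k).IsDiag := by
  refine ⟨fun i hi => ⟨?_, ?_⟩, ?_⟩
  · rw [cornerTL_eq_xorMatrix]
    exact isDiag_Had_mul_xorMatrix_mul_Had i _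
  · rw [cornerTR_eq_xorMatrix hi]
    exact isDiag_Had_mul_xorMatrix_mul_Had i _
  · rw [gameMatrix_eq_xorMatrix]
    exact isDiag_Had_mul_xorMatrix_mul_Had k _
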